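/- Dinkelbach zero-point characterization: for a nonempty finite feasible set F, numerator N : F → ℝ and denominator D : F → ℝ with D(x) > 0 for all x, define F(q) = max_{x∈F} (N(x) − q·D(x)) and q* = max_{x∈F} N(x)/D(x). Then F(q*) = 0, and conversely if F(q) = 0 then q = q*. -/

import Mathlib

/-! Since `D x > 0`, the sign of `N x - q * D x` is the sign of `N x / D x - q`. Hence
`max (N - q D) ≤ 0` exactly when `q* ≤ q`, and `0 ≤ max (N - q D)` exactly when `q ≤ q*`. -/

namespace Finset

variable {ι : Type*} {s : Finset ι} (hs : s.Nonempty) {N D : ι → ℝ} {q : ℝ}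

theorem sup'_sub_mul_nonpos_iff (hD : ∀ x ∈ s, 0 < D x) :
    s.sup' hs (fun x => N x - q * D x) ≤ 0 ↔ s.sup' hs (fun x => N x / D x) ≤ q := by
  simp only [sup'_le_iff, sub_nonpos]
  exact forall₂_congr fun x hx => (div_le_iff₀ (hD x hx)).symm

theorem sup'_sub_mul_nonneg_iff (hD : ∀ x ∈ s, 0 < D x) :
    0 ≤ s.sup' hs (fun x => N x - q * D x) ↔ q ≤ s.sup' hs (fun x => N x / D x) := by
  simp only [le_sup'_iff, sub_nonneg]
  exact exists_congr fun x => and_congr_right fun hx => (le_div_iff₀ (hD x hx)).symm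

theorem sup'_sub_mul_eq_zero_iff (hD : ∀ x ∈ s, 0 < D x) :
    s.sup' hs (fun x => N x - q * D x) = 0 ↔ q = s.sup' hs (fun x => N x / D x) := by
  rw [le_antisymm_iff, le_antisymm_iff, sup'_sub_mul_nonpos_iff hs hD,
    sup'_sub_mul_nonneg_iff hs hD, and_comm]

end Finset

/-- Dinkelbach zero-point characterization: F(q*) = 0 where
q* = max N/D, and conversely F(q) = 0 implies q = q*. -/
theorem dinkelbach_zero_point {α : Type*} [Fintype α] [Nonempty α]
    (N D : α → ℝ) (hD : ∀ x, 0 < D x)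
    (F : ℝ → ℝ)
    (hF : ∀ q, F q = Finset.univ.sup' Finset.univ_nonempty
        (fun x => N x - q * D x))
    (qstar : ℝ)
    (hq : qstar = Finset.univ.sup' Finset.univ_nonempty (fun x => N x / D x)) :
    F qstar = 0 ∧ ∀ q : ℝ, F q = 0 → q = qstar := by
  have hF_eq_zero_iff (q : ℝ) : F q = 0 ↔ q = qstar := by
    rw [hF, hq]
    exact Finset.sup'_sub_mul_eq_zero_iff _ fun x _ => hD x
  exact ⟨(hF_eq_zero_iff qstar).2 rfl, fun q => (hF_eq_zero_iff q).1⟩
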